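/- Let 𝒢 = (G,I,O,λ) be a labelled open graph with I∩O = ∅ and λ(v) ∈ {X, XY} for all non-outputs. Then 𝒢 has a focussed Pauli flow if and only if there exists a directed graph F = (V, E_F) such that: (i) the subgraph F' consisting of edges (u,v) ∈ E_F with λ(u) = XY is acyclic, and (ii) A_G|_{I̅}^{O̅} · A_F|_{O̅}^{I̅} = Id_{O̅} over F₂, where A_F|_{O̅}^{I̅} is the I̅ × O̅ submatrix of the adjacency (incidence) matrix of F obtained by removing input rows and output columns. Moreover, the columns of A_F|_{O̅}^{I̅} encode the correction sets. -/

import Mathlib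

/-!
Over F₂, entry `(v, w)` of `A_G · A_F` is the parity of `|N(v) ∩ c(w)|`, so the matrix identity
says exactly that the odd neighbourhood of each correction set `c(w)` meets the non-outputs in
`w` alone. When every non-output is labelled X or XY, this is what (P4), (P7) and the focussing
condition (F2) together demand, while (P1) only orders the XY-labelled vertices of correction sets
after their owner: that is the acyclicity of the XY-sourced edges `u → w` with `u ∈ c(w)`. The
remaining Pauli flow and focussing conditions concern labels that do not occur.
-/

inductive MLabel | X | Y | Z | XY | XZ | YZ
deriving DecidableEq

open Finset

variable {V : Type} [Fintype V] [DecidableEq V]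

/-- The odd neighbourhood of a set of vertices. -/
def Odds (G : SimpleGraph V) [DecidableRel G.Adj] (A : Finset V) : Finset V :=
  Finset.univ.filter fun v => Odd (A ∩ G.neighborFinset v).card

/-- Pauli flow conditions (P1)-(P9) for a labelled open graph. -/
structure PauliFlow (G : SimpleGraph V) [DecidableRel G.Adj]
    (I O : Finset V) (lam : V → MLabel) (c : V → Finset V) (prec : V → V → Prop) : Prop where
  irrefl : ∀ u, ¬ prec u u
  trans : ∀ u v w, prec u v → prec v w → prec u w
  csub : ∀ u, u ∉ O → ∀ v ∈ c u, v ∉ I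
  P1 : ∀ u, u ∉ O → ∀ v ∈ c u, v ∉ O → u ≠ v →
      lam v ≠ MLabel.X → lam v ≠ MLabel.Y → prec u v
  P2 : ∀ u, u ∉ O → ∀ v ∈ Odds G (c u), v ∉ O → u ≠ v →
      lam v ≠ MLabel.Y → lam v ≠ MLabel.Z → prec u v
  P3 : ∀ u, u ∉ O → ∀ v, v ∉ O → ¬ prec u v → u ≠ v → lam v = MLabel.Y →
      (v ∈ c u ↔ v ∈ Odds G (c u))
  P4 : ∀ u, u ∉ O → lam u = MLabel.XY → u ∉ c u ∧ u ∈ Odds G (c u)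
  P5 : ∀ u, u ∉ O → lam u = MLabel.XZ → u ∈ c u ∧ u ∈ Odds G (c u)
  P6 : ∀ u, u ∉ O → lam u = MLabel.YZ → u ∈ c u ∧ u ∉ Odds G (c u)
  P7 : ∀ u, u ∉ O → lam u = MLabel.X → u ∈ Odds G (c u)
  P8 : ∀ u, u ∉ O → lam u = MLabel.Z → u ∈ c u
  P9 : ∀ u, u ∉ O → lam u = MLabel.Y → Xor' (u ∈ c u) (u ∈ Odds G (c u))

/-- Focussing conditions (F1)-(F3). -/
def Focussed (G : SimpleGraph V) [DecidableRel G.Adj]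
    (O : Finset V) (lam : V → MLabel) (c : V → Finset V) : Prop :=
  ∀ v, v ∉ O →
    (∀ w, w ∉ O → w ≠ v → w ∈ c v →
      lam w = MLabel.XY ∨ lam w = MLabel.X ∨ lam w = MLabel.Y) ∧
    (∀ w, w ∉ O → w ≠ v → w ∈ Odds G (c v) →
      lam w = MLabel.XZ ∨ lam w = MLabel.YZ ∨ lam w = MLabel.Y ∨ lam w = MLabel.Z) ∧
    (∀ w, w ∉ O → w ≠ v → lam w = MLabel.Y → (w ∈ c v ↔ w ∈ Odds G (c v)))

/-- The reduced adjacency matrix over F₂: rows indexed by non-outputs, columns by non-inputs. -/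
def redAdj (G : SimpleGraph V) [DecidableRel G.Adj] (I O : Finset V) :
    Matrix {v : V // v ∉ O} {v : V // v ∉ I} (ZMod 2) :=
  Matrix.of fun v u => if G.Adj v.val u.val then 1 else 0

/-- The `I̅ × O̅` submatrix over F₂ of the adjacency matrix of a directed graph
given by `F : V → V → Bool` (entry `(u,v)` is 1 iff there is an edge `u → v`). -/
def dirAdj (I O : Finset V) (F : V → V → Bool) :
    Matrix {v : V // v ∉ I} {v : V // v ∉ O} (ZMod 2) :=
  Matrix.of fun u w => if F u.val w.val = true then 1 else 0


def corrSets (I : Finset V) (F : V → V → Bool) (v : V) : Finset V :=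
  univ.filter fun u => u ∉ I ∧ F u v = true

lemma redAdj_mul_dirAdj_apply (G : SimpleGraph V) [DecidableRel G.Adj] (I O : Finset V)
    (F : V → V → Bool) (v w : {v : V // v ∉ O}) :
    (redAdj G I O * dirAdj I O F) v w = if v.1 ∈ Odds G (corrSets I F w) then 1 else 0 := by
  have hcard : (redAdj G I O * dirAdj I O F) v w = #(corrSets I F w ∩ G.neighborFinset v) := by
    simp only [Matrix.mul_apply, redAdj, dirAdj, Matrix.of_apply, mul_ite, mul_one, mul_zero,
      ← ite_and]
    rw [← sum_subtype (univ.filter (· ∉ I)) (by simp)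
      (fun u => if F u w = true ∧ G.Adj v u then (1 : ZMod 2) else 0),
      sum_boole, filter_filter]
    congr 2
    ext u
    simp only [corrSets, mem_filter, mem_inter, mem_univ, true_and,
      SimpleGraph.mem_neighborFinset]
    tauto
  simp only [hcard, Odds, mem_filter, mem_univ, true_and]
  split_ifs with h
  · exact ZMod.natCast_eq_one_iff_odd.mpr h
  · exact ZMod.natCast_eq_zero_iff_even.mpr (Nat.not_odd_iff_even.mp h)

lemma redAdj_mul_dirAdj_eq_one_iff (G : SimpleGraph V) [DecidableRel G.Adj] (I O : Finset V)
    (F : V → V → Bool) :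
    redAdj G I O * dirAdj I O F = 1 ↔
      ∀ v, v ∉ O → ∀ w, w ∉ O → (v ∈ Odds G (corrSets I F w) ↔ v = w) := by
  simp only [← Matrix.ext_iff, redAdj_mul_dirAdj_apply, Matrix.one_apply, Subtype.forall]
  refine forall₂_congr fun v hv => forall₂_congr fun w hw => ?_
  split_ifs <;> simp_all

theorem Relation.not_transGen_self_of_reverse_strictOrder {α : Type*} {r p : α → α → Prop}
    {s : Set α} (p_irrefl : ∀ a, ¬ p a a) (p_trans : ∀ a b c, p a b → p b c → p a c)
    (hr_mem : ∀ a b, r a b → b ∈ s) (hr : ∀ a b, r a b → a ∈ s → p b a) (a : α) :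
    ¬ TransGen r a a := by
  have descend : ∀ a b, TransGen r a b → a ∈ s → p b a := by
    intro a b hab
    induction hab using TransGen.head_induction_on with
    | single h => exact hr _ _ h
    | head h _ ih => exact fun ha => p_trans _ _ _ (ih (hr_mem _ _ h)) (hr _ _ h ha)
  intro hcyc
  obtain ⟨b, -, hba⟩ := TransGen.tail'_iff.mp hcyc
  exact p_irrefl a (descend a a hcyc (hr_mem b a hba))

lemma MLabel.ne_of_eq_X_or_XY {l : MLabel} (h : l = .X ∨ l = .XY) :
    l ≠ .Y ∧ l ≠ .Z ∧ l ≠ .XZ ∧ l ≠ .YZ := by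
  rcases h with rfl | rfl <;> simp

def flowGraph (O : Finset V) (c : V → Finset V) (u v : V) : Bool :=
  decide (v ∉ O ∧ u ∈ c v)

lemma corrSets_flowGraph {I O : Finset V} {c : V → Finset V} {v : V} (hv : v ∉ O)
    (hc : ∀ u ∈ c v, u ∉ I) : corrSets I (flowGraph O c) v = c v := by
  ext u
  simp only [corrSets, flowGraph, mem_filter, mem_univ, true_and, decide_eq_true_eq]
  exact ⟨fun h => h.2.2, fun h => ⟨hc u h, hv, h⟩⟩

lemma flowGraph_acyclic {G : SimpleGraph V} [DecidableRel G.Adj] {I O : Finset V}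
    {lam : V → MLabel} {c : V → Finset V} {prec : V → V → Prop}
    (pf : PauliFlow G I O lam c prec) (v : V) :
    ¬ Relation.TransGen (fun a b => flowGraph O c a b = true ∧ lam a = MLabel.XY) v v := by
  apply Relation.not_transGen_self_of_reverse_strictOrder (s := {a | a ∉ O}) pf.irrefl pf.trans
  · exact fun a b h => (of_decide_eq_true h.1).1
  rintro a b ⟨hab, hXY⟩ haO
  obtain ⟨hbO, hac⟩ := of_decide_eq_true hab
  obtain rfl | hne := eq_or_ne b a
  · exact absurd hac (pf.P4 b haO hXY).1
  · exact pf.P1 b hbO a hac haO hne (by simp [hXY]) (by simp [hXY])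

section XLabels

variable {G : SimpleGraph V} [DecidableRel G.Adj] {I O : Finset V} {lam : V → MLabel}
  (hlam : ∀ v, v ∉ O → lam v = MLabel.X ∨ lam v = MLabel.XY)
include hlam

lemma pauliFlow_corrSets {F : V → V → Bool}
    (hac : ∀ v, ¬ Relation.TransGen (fun a b => F a b = true ∧ lam a = MLabel.XY) v v)
    (hmat : redAdj G I O * dirAdj I O F = 1) :
    PauliFlow G I O lam (corrSets I F)
      (Relation.TransGen (fun v w => F w v = true ∧ lam w = MLabel.XY)) := by
  have hodd := (redAdj_mul_dirAdj_eq_one_iff G I O F).mp hmat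
  have hne := fun v hv => MLabel.ne_of_eq_X_or_XY (hlam v hv)
  have hF : ∀ {u v}, v ∈ corrSets I F u → F v u = true := fun h => (mem_filter.mp h).2.2
  refine
    { irrefl := fun u h => hac u (Relation.transGen_swap.mp h)
      trans := fun _ _ _ => Relation.TransGen.trans
      csub := fun _ _ _ h => (mem_filter.mp h).2.1
      P1 := fun u _ v hv hvO _ hX _ =>
        .single ⟨hF hv, (hlam v hvO).resolve_left hX⟩
      P2 := fun u hu v hv hvO huv _ _ => absurd ((hodd v hvO u hu).mp hv) huv.symm
      P3 := fun _ _ v hvO _ _ hY => absurd hY (hne v hvO).1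
      P4 := fun u hu hXY => ⟨fun h => hac u (.single ⟨hF h, hXY⟩), (hodd u hu u hu).mpr rfl⟩
      P5 := fun u hu h => absurd h (hne u hu).2.2.1
      P6 := fun u hu h => absurd h (hne u hu).2.2.2
      P7 := fun u hu _ => (hodd u hu u hu).mpr rfl
      P8 := fun u hu h => absurd h (hne u hu).2.1
      P9 := fun u hu h => absurd h (hne u hu).1 }

lemma focussed_corrSets {F : V → V → Bool}
    (hmat : redAdj G I O * dirAdj I O F = 1) : Focussed G O lam (corrSets I F) := by
  have hodd := (redAdj_mul_dirAdj_eq_one_iff G I O F).mp hmat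
  intro v hv
  refine ⟨fun w hw _ _ => ?_, fun w hw hwv h => absurd ((hodd w hw v hv).mp h) hwv,
    fun w hw _ hY => absurd hY (MLabel.ne_of_eq_X_or_XY (hlam w hw)).1⟩
  rcases hlam w hw with h | h
  · exact .inr (.inl h)
  · exact .inl h

lemma redAdj_mul_dirAdj_flowGraph {c : V → Finset V} {prec : V → V → Prop}
    (pf : PauliFlow G I O lam c prec) (foc : Focussed G O lam c) :
    redAdj G I O * dirAdj I O (flowGraph O c) = 1 := by
  rw [redAdj_mul_dirAdj_eq_one_iff]
  intro v hv w hw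
  rw [corrSets_flowGraph hw (pf.csub w hw)]
  refine ⟨fun h => by_contra fun hvw => ?_, ?_⟩
  · have := MLabel.ne_of_eq_X_or_XY (hlam v hv)
    rcases (foc w hw).2.1 v hv hvw h with h | h | h | h <;> tauto
  · rintro rfl
    rcases hlam v hv with h | h
    · exact pf.P7 v hv h
    · exact (pf.P4 v hv h).2

end XLabels

theorem focussed_flow_iff_dag_general (G : SimpleGraph V) [DecidableRel G.Adj]
    (I O : Finset V) (lam : V → MLabel)
    (hlam : ∀ v, v ∉ O → lam v = MLabel.X ∨ lam v = MLabel.XY) :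
    ((∃ (c : V → Finset V) (prec : V → V → Prop),
        PauliFlow G I O lam c prec ∧ Focussed G O lam c) ↔
      ∃ F : V → V → Bool,
        (∀ v, ¬ Relation.TransGen (fun a b => F a b = true ∧ lam a = MLabel.XY) v v) ∧
        redAdj G I O * dirAdj I O F = 1) ∧
    (∀ F : V → V → Bool,
      (∀ v, ¬ Relation.TransGen (fun a b => F a b = true ∧ lam a = MLabel.XY) v v) →
      redAdj G I O * dirAdj I O F = 1 →
        PauliFlow G I O lam
          (fun v => Finset.univ.filter fun u => u ∉ I ∧ F u v = true)
          (Relation.TransGen (fun v w => F w v = true ∧ lam w = MLabel.XY)) ∧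
        Focussed G O lam
          (fun v => Finset.univ.filter fun u => u ∉ I ∧ F u v = true)) := by
  refine ⟨⟨?_, fun ⟨F, hac, hmat⟩ =>
      ⟨_, _, pauliFlow_corrSets hlam hac hmat, focussed_corrSets hlam hmat⟩⟩,
    fun F hac hmat => ⟨pauliFlow_corrSets hlam hac hmat, focussed_corrSets hlam hmat⟩⟩
  rintro ⟨c, prec, pf, foc⟩
  exact ⟨flowGraph O c, flowGraph_acyclic pf, redAdj_mul_dirAdj_flowGraph hlam pf foc⟩

/-- A labelled open graph with `I ∩ O = ∅` and labels in {X, XY} has a focussed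
Pauli flow iff there is a directed graph `F` whose XY-sourced subgraph is
acyclic and whose reduced adjacency matrix is a right inverse of the reduced
adjacency matrix of `G`; moreover the columns of that matrix encode correction
sets of a focussed Pauli flow, with the order given by the transitive closure
of the reversed XY-sourced edges. -/
theorem focussed_flow_iff_dag (G : SimpleGraph V) [DecidableRel G.Adj]
    (I O : Finset V) (hIO : I ∩ O = ∅) (lam : V → MLabel)
    (hlam : ∀ v, v ∉ O → lam v = MLabel.X ∨ lam v = MLabel.XY) :
    ((∃ (c : V → Finset V) (prec : V → V → Prop),
        PauliFlow G I O lam c prec ∧ Focussed G O lam c) ↔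
      ∃ F : V → V → Bool,
        (∀ v, ¬ Relation.TransGen (fun a b => F a b = true ∧ lam a = MLabel.XY) v v) ∧
        redAdj G I O * dirAdj I O F = 1) ∧
    (∀ F : V → V → Bool,
      (∀ v, ¬ Relation.TransGen (fun a b => F a b = true ∧ lam a = MLabel.XY) v v) →
      redAdj G I O * dirAdj I O F = 1 →
        PauliFlow G I O lam
          (fun v => Finset.univ.filter fun u => u ∉ I ∧ F u v = true)
          (Relation.TransGen (fun v w => F w v = true ∧ lam w = MLabel.XY)) ∧
        Focussed G O lam
          (fun v => Finset.univ.filter fun u => u ∉ I ∧ F u v = true)) :=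
  focussed_flow_iff_dag_general G I O lam hlam
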